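/- Let D be a triangulated disk with good ordering T₁,...,T_m, and suppose ∂D has a shortening move across T_i. Then the reordering T₁,...,T_{i-1},T_{i+1},...,T_m,T_i is also a good ordering, and each local maximum of its boundary-length sequence is less than or equal to the corresponding local maximum of the original sequence. -/

import Mathlib

open Finset

namespace TriSphere

variable {V : Type} [Fintype V] [DecidableEq V]

/-- The set of vertices of a set of faces. -/
def verts (F : Finset (Finset V)) : Finset V := F.biUnion id

/-- The edges of a set of (triangular) faces: the 2-element subsets of faces. -/
def edgs (F : Finset (Finset V)) : Finset (Finset V) :=
  F.biUnion fun f => f.powersetCard 2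

/-- The faces of `F` containing a given edge. -/
def facesOn (F : Finset (Finset V)) (e : Finset V) : Finset (Finset V) :=
  F.filter fun f => e ⊆ f

/-- Boundary edges: edges contained in exactly one face. -/
def bdryEdges (F : Finset (Finset V)) : Finset (Finset V) :=
  (edgs F).filter fun e => (facesOn F e).card = 1

/-- Boundary vertices. -/
def bdryVerts (F : Finset (Finset V)) : Finset V := (bdryEdges F).biUnion id

/-- The length of the boundary: the number of boundary vertices. -/
def bdryLen (F : Finset (Finset V)) : ℕ := (bdryVerts F).card

/-- The dual graph of a set of faces: two faces are adjacent iff they share an edge. -/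
def dualGraph (F : Finset (Finset V)) : SimpleGraph {f // f ∈ F} where
  Adj f g := f ≠ g ∧ (f.1 ∩ g.1).card = 2
  symm := ⟨fun f g h => ⟨h.1.symm, by rw [Finset.inter_comm]; exact h.2⟩⟩
  loopless := ⟨fun f h => h.1 rfl⟩

instance (F : Finset (Finset V)) : DecidableRel (dualGraph F).Adj :=
  fun f g => inferInstanceAs (Decidable (f ≠ g ∧ (f.1 ∩ g.1).card = 2))

/-- A combinatorial disk: a nonempty, dually connected set of triangles, each edge on at
most two faces, with Euler characteristic 1. -/
def IsDisk (F : Finset (Finset V)) : Prop :=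
  F.Nonempty ∧ (∀ f ∈ F, f.card = 3) ∧ (dualGraph F).Connected ∧
    (∀ e ∈ edgs F, (facesOn F e).card ≤ 2) ∧
    ((verts F).card : ℤ) - (edgs F).card + F.card = 1

/-- A simplicial triangulation of the 2-sphere: a closed simplicial surface
(every edge on exactly two faces, vertex links connected, dual graph connected)
with Euler characteristic 2. -/
structure SphereTri (V : Type) [Fintype V] [DecidableEq V] where
  faces : Finset (Finset V)
  nonempty : faces.Nonempty
  card3 : ∀ f ∈ faces, f.card = 3
  edge2 : ∀ e ∈ edgs faces, (facesOn faces e).card = 2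
  dualConn : (dualGraph faces).Connected
  linkConn : ∀ v : V, ∀ f ∈ faces, ∀ g ∈ faces, v ∈ f → v ∈ g →
    Relation.ReflTransGen
      (fun a b : Finset V => a ∈ faces ∧ b ∈ faces ∧ v ∈ a ∧ v ∈ b ∧ (a ∩ b).card = 2) f g
  euler : ((verts faces).card : ℤ) - (edgs faces).card + faces.card = 2
  allVerts : verts faces = Finset.univ

/-- The 1-skeleton of a triangulation of the sphere. -/
def skel (T : SphereTri V) : SimpleGraph V where
  Adj u v := u ≠ v ∧ ({u, v} : Finset V) ∈ edgs T.faces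
  symm := ⟨fun u v h => ⟨h.1.symm, by rw [Finset.pair_comm]; exact h.2⟩⟩
  loopless := ⟨fun u h => h.1 rfl⟩

/-- The three edges of a triangle. -/
def faceEdges (f : Finset V) : Finset (Finset V) := f.powersetCard 2

/-- An unordered pair, as a 2-element finset. -/
def symEdge (e : Sym2 V) : Finset V :=
  Sym2.lift ⟨fun a b => ({a, b} : Finset V), fun a b => Finset.pair_comm a b⟩ e

/-- The set of edges of a closed walk (e.g. of an embedded cycle). -/
def cycleEdges (T : SphereTri V) {v : V} (c : (skel T).Walk v v) : Finset (Finset V) :=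
  c.edges.toFinset.image symEdge

/-- The face `f` provides a shortening move for the cycle `c`: `f` meets `c` in exactly
two (necessarily adjacent) edges.  (A face meeting `c` in one edge gives a lengthening.) -/
def Shortens (T : SphereTri V) {v : V} (c : (skel T).Walk v v) (f : Finset V) : Prop :=
  f ∈ T.faces ∧ (faceEdges f ∩ cycleEdges T c).card = 2

/-- The cycle `c` is the boundary of a triangle of `T`. -/
def IsTriBdry (T : SphereTri V) {v : V} (c : (skel T).Walk v v) : Prop :=
  ∃ f ∈ T.faces, cycleEdges T c = faceEdges f

/-- A stable geodesic: an embedded cycle admitting no shortening move which is not the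
boundary of a triangle. -/
def StableGeodesic (T : SphereTri V) {v : V} (c : (skel T).Walk v v) : Prop :=
  c.IsCycle ∧ (∀ f, ¬ Shortens T c f) ∧ ¬ IsTriBdry T c

/-- Two faces are on the same side of the cycle `c` if they are joined by a dual path
which never crosses an edge of `c`. -/
def SameSide (T : SphereTri V) {v : V} (c : (skel T).Walk v v) (f g : Finset V) : Prop :=
  Relation.ReflTransGen
    (fun a b : Finset V => a ∈ T.faces ∧ b ∈ T.faces ∧ (a ∩ b).card = 2 ∧
      (a ∩ b) ∉ cycleEdges T c) f g

/-- Two faces on opposite sides of the cycle `c`. -/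
def OppSides (T : SphereTri V) {v : V} (c : (skel T).Walk v v) (f g : Finset V) : Prop :=
  f ∈ T.faces ∧ g ∈ T.faces ∧ ¬ SameSide T c f g

/-- An unstable geodesic: a cycle with shortening moves on both sides, such that every
pair of shortening moves on opposite sides uses triangles meeting in an edge of the cycle
(so the two moves cannot be performed simultaneously). -/
def UnstableGeodesic (T : SphereTri V) {v : V} (c : (skel T).Walk v v) : Prop :=
  c.IsCycle ∧
  (∃ f g, Shortens T c f ∧ Shortens T c g ∧ OppSides T c f g) ∧
  (∀ f g, Shortens T c f → Shortens T c g → OppSides T c f g →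
    ∃ e ∈ cycleEdges T c, e ⊆ f ∧ e ⊆ g)

/-- `seq L k = |∂ I_k|`, the boundary length of the union of the first `k` triangles. -/
def seq (L : List (Finset V)) (k : ℕ) : ℕ := bdryLen (L.take k).toFinset

/-- A good ordering of the faces `F`: every proper partial union is a disk. -/
def Good (F : Finset (Finset V)) (L : List (Finset V)) : Prop :=
  L.Nodup ∧ L.toFinset = F ∧
    ∀ k, 1 ≤ k → k < L.length → IsDisk (L.take k).toFinset

/-- `|∂ I_j|` is a local maximum of the ordering (with `|∂ I_0| = |∂ I_n| = 0`). -/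
def LocalMaxAt (L : List (Finset V)) (j : ℕ) : Prop :=
  1 ≤ j ∧ j < L.length ∧ seq L (j - 1) < seq L j ∧ seq L (j + 1) < seq L j

/-- `|∂ I_j|` is a local minimum of the ordering. -/
def LocalMinAt (L : List (Finset V)) (j : ℕ) : Prop :=
  1 ≤ j ∧ j < L.length ∧ seq L j < seq L (j - 1) ∧ seq L j < seq L (j + 1)

instance (L : List (Finset V)) : DecidablePred (LocalMaxAt L) := fun _ =>
  inferInstanceAs (Decidable (_ ∧ _ ∧ _ ∧ _))
instance (L : List (Finset V)) : DecidablePred (LocalMinAt L) := fun _ =>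
  inferInstanceAs (Decidable (_ ∧ _ ∧ _ ∧ _))

/-- The indices of the local maxima of an ordering. -/
def maxIndices (L : List (Finset V)) : List ℕ :=
  (List.range L.length).filter fun j => decide (LocalMaxAt L j)

/-- The indices of the local minima of an ordering. -/
def minIndices (L : List (Finset V)) : List ℕ :=
  (List.range L.length).filter fun j => decide (LocalMinAt L j)

/-- The width of an ordering: the list of values of its local maxima, sorted
in decreasing order (so widths are compared lexicographically). -/
def widthList (L : List (Finset V)) : List ℕ :=
  List.insertionSort (· ≥ ·) ((maxIndices L).map (seq L))

/-- A thin ordering: a good ordering minimizing the width lexicographically. -/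
def Thin (F : Finset (Finset V)) (L : List (Finset V)) : Prop :=
  Good F L ∧ ∀ L', Good F L' → ¬ List.Lex (· < ·) (widthList L') (widthList L)

/-- Bridge position: a good ordering with a single local maximum and no local minima. -/
def Bridge (F : Finset (Finset V)) (L : List (Finset V)) : Prop :=
  Good F L ∧ (∃! j, LocalMaxAt L j) ∧ ∀ j, ¬ LocalMinAt L j

/-- A wheel: a triangulated disk whose dual graph is a cycle (connected, all degrees 2). -/
def IsWheel (F : Finset (Finset V)) : Prop :=
  3 ≤ F.card ∧ (dualGraph F).Connected ∧ ∀ f, (dualGraph F).degree f = 2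

end TriSphere

/-!
Write `T = {v, a, b}` with `{v, a}`, `{v, b}` on `∂D` and `{a, b}` interior. Mod-2 chains give
`χ ≤ 1` for every dually connected triangle complex with a boundary edge (`H₂ = 0` and
`rank ∂₁ ≥ V - 1`); since `D \ T` would have `χ = 2` if `v` lay on a second triangle, the apex `v`
lies on `T` alone. Hence for every partial union `I ∋ T` with at least two triangles, `I \ T` is
again a disk and `|∂(I \ T)| = |∂I| - 1`. So the new boundary sequence agrees with the old one up
to position `i` and afterwards is the old one shifted by one place and lowered by one: every local
maximum of the new sequence lies over a local maximum of the old one of at least the same value,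
at an index that is strictly increasing in the new index.
-/

namespace TriSphere

variable {V : Type} [DecidableEq V]

section Basic

variable {F I : Finset (Finset V)} {e f T : Finset V} {u v w : V}

lemma mem_verts : w ∈ verts F ↔ ∃ f ∈ F, w ∈ f := by
  simp [verts]

omit [DecidableEq V] in
lemma mem_faceEdges : e ∈ faceEdges f ↔ e ⊆ f ∧ e.card = 2 :=
  mem_powersetCard

lemma mem_edgs : e ∈ edgs F ↔ ∃ f ∈ F, e ⊆ f ∧ e.card = 2 := by
  simp [edgs, mem_powersetCard]

lemma mem_facesOn : f ∈ facesOn F e ↔ f ∈ F ∧ e ⊆ f :=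
  mem_filter

lemma mem_bdryEdges : e ∈ bdryEdges F ↔ e ∈ edgs F ∧ (facesOn F e).card = 1 :=
  mem_filter

lemma mem_bdryVerts : w ∈ bdryVerts F ↔ ∃ e ∈ bdryEdges F, w ∈ e := by
  simp [bdryVerts]

lemma card_eq_two_of_mem_edgs (he : e ∈ edgs F) : e.card = 2 := by
  obtain ⟨_, _, _, h⟩ := mem_edgs.1 he
  exact h

lemma edgs_mono (h : I ⊆ F) : edgs I ⊆ edgs F :=
  biUnion_subset_biUnion_of_subset_left _ h

lemma facesOn_mono (h : I ⊆ F) : facesOn I e ⊆ facesOn F e :=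
  filter_subset_filter _ h

lemma facesOn_erase : facesOn (F.erase T) e = (facesOn F e).erase T :=
  filter_erase _ _ _

lemma facesOn_eq_singleton_of_mem_bdryEdges (he : e ∈ bdryEdges F) (hT : T ∈ F)
    (heT : e ⊆ T) : facesOn F e = {T} := by
  obtain ⟨t, ht⟩ := card_eq_one.1 (mem_bdryEdges.1 he).2
  have hTe : T ∈ facesOn F e := mem_facesOn.2 ⟨hT, heT⟩
  rw [ht, mem_singleton] at hTe
  rw [ht, hTe]

lemma mem_bdryEdges_erase_iff_of_not_subset (heT : ¬ e ⊆ T) :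
    e ∈ bdryEdges (F.erase T) ↔ e ∈ bdryEdges F := by
  have hedgs : e ∈ edgs (F.erase T) ↔ e ∈ edgs F := by
    simp only [mem_edgs, mem_erase]
    exact ⟨fun ⟨f, ⟨_, hf⟩, h⟩ ↦ ⟨f, hf, h⟩,
      fun ⟨f, hf, hef, h⟩ ↦ ⟨f, ⟨fun hfT ↦ heT (hfT ▸ hef), hf⟩, hef, h⟩⟩
  rw [mem_bdryEdges, mem_bdryEdges, hedgs, facesOn_erase,
    erase_eq_of_notMem fun h ↦ heT (mem_facesOn.1 h).2]

lemma pair_mem_edgs (hf : f ∈ F) (hu : u ∈ f) (hw : w ∈ f) (huw : u ≠ w) :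
    ({u, w} : Finset V) ∈ edgs F :=
  mem_edgs.2 ⟨f, hf, insert_subset hu (singleton_subset_iff.2 hw), card_pair huw⟩

lemma eq_pair_of_subset_triple {a b c : V} (he : e ⊆ {a, b, c}) (hcard : e.card = 2) :
    e = {a, b} ∨ e = {a, c} ∨ e = {b, c} := by
  obtain ⟨x, y, hxy, rfl⟩ := card_eq_two.1 hcard
  have hx : x ∈ ({a, b, c} : Finset V) := he (by simp)
  have hy : y ∈ ({a, b, c} : Finset V) := he (by simp)
  simp only [mem_insert, mem_singleton] at hx hy
  rcases hx with rfl | rfl | rfl <;> rcases hy with rfl | rfl | rfl <;>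
    simp_all [pair_comm]

lemma bdryVerts_singleton (hf : f.card = 3) : bdryVerts {f} = f := by
  ext w
  simp only [mem_bdryVerts, mem_bdryEdges, edgs, singleton_biUnion, facesOn, mem_powersetCard]
  constructor
  · rintro ⟨e, ⟨⟨hef, -⟩, -⟩, hwe⟩
    exact hef hwe
  · intro hw
    obtain ⟨x, hx, hxw⟩ := exists_mem_ne (s := f) (by omega) w
    have hwx : {w, x} ⊆ f := insert_subset hw (singleton_subset_iff.2 hx)
    refine ⟨{w, x}, ⟨⟨hwx, card_pair hxw.symm⟩, ?_⟩, mem_insert_self _ _⟩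
    rw [filter_singleton, if_pos hwx, card_singleton]

lemma bdryLen_singleton (hf : f.card = 3) : bdryLen {f} = 3 := by
  rw [bdryLen, bdryVerts_singleton hf, hf]

end Basic

namespace IsDisk

variable {F : Finset (Finset V)}

lemma card_eq_three (hF : IsDisk F) {f : Finset V} (hf : f ∈ F) : f.card = 3 :=
  hF.2.1 f hf

lemma connected (hF : IsDisk F) : (dualGraph F).Connected :=
  hF.2.2.1

lemma card_facesOn_le_two (hF : IsDisk F) {e : Finset V} (he : e ∈ edgs F) :
    (facesOn F e).card ≤ 2 :=
  hF.2.2.2.1 e he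

lemma card_facesOn_le_two_of_subset (hF : IsDisk F) {I : Finset (Finset V)} (hIF : I ⊆ F)
    {e : Finset V} (he : e ∈ edgs I) : (facesOn I e).card ≤ 2 :=
  (card_le_card (facesOn_mono hIF)).trans (hF.card_facesOn_le_two (edgs_mono hIF he))

lemma euler (hF : IsDisk F) : ((verts F).card : ℤ) - (edgs F).card + F.card = 1 :=
  hF.2.2.2.2

end IsDisk

section EulerBound

variable (G : Finset (Finset V))

/-- The mod-2 boundary map from 2-chains to 1-chains. -/
def edgeFaceIncidence : Matrix (edgs G) G (ZMod 2) :=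
  fun e f => if (e : Finset V) ⊆ f then 1 else 0

/-- The mod-2 boundary map from 1-chains to 0-chains. -/
def vertEdgeIncidence : Matrix (verts G) (edgs G) (ZMod 2) :=
  fun w e => if (w : V) ∈ (e : Finset V) then 1 else 0

variable {G}

lemma card_filter_mem_faceEdges {f : Finset V} (hf : f.card = 3) {w : V} (hw : w ∈ f) :
    ((faceEdges f).filter (w ∈ ·)).card = 2 := by
  have hnot : (faceEdges f).filter (w ∉ ·) = (f.erase w).powersetCard 2 := by
    ext e
    simp only [faceEdges, mem_filter, mem_powersetCard, subset_erase]
    tauto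
  have := card_filter_add_card_filter_not (s := faceEdges f) (w ∈ ·)
  rw [hnot, card_powersetCard, card_erase_of_mem hw, faceEdges, card_powersetCard, hf] at this
  rw [faceEdges]
  simpa using this

lemma vertEdgeIncidence_mul_edgeFaceIncidence (h3 : ∀ f ∈ G, f.card = 3) :
    vertEdgeIncidence G * edgeFaceIncidence G = 0 := by
  ext ⟨w, -⟩ ⟨f, hf⟩
  simp only [Matrix.mul_apply, vertEdgeIncidence, edgeFaceIncidence, mul_ite, mul_one, mul_zero,
    Matrix.zero_apply]
  rw [sum_coe_sort (edgs G) fun e ↦ if e ⊆ f then if w ∈ e then (1 : ZMod 2) else 0 else 0]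
  simp only [← ite_and, sum_boole]
  have hfilter :
      (edgs G).filter (fun e ↦ e ⊆ f ∧ w ∈ e) = (faceEdges f).filter (w ∈ ·) := by
    ext e
    simp only [mem_filter, mem_faceEdges, mem_edgs]
    exact ⟨fun ⟨⟨_, _, _, h⟩, hef, hw⟩ ↦ ⟨⟨hef, h⟩, hw⟩,
      fun ⟨⟨hef, h⟩, hw⟩ ↦ ⟨⟨f, hf, hef, h⟩, hef, hw⟩⟩
  rw [hfilter]
  by_cases hw : w ∈ f
  · rw [card_filter_mem_faceEdges (h3 f hf) hw]
    rfl
  · rw [filter_false_of_mem fun e he hwe ↦ hw ((mem_faceEdges.1 he).1 hwe)]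
    simp

lemma edgeFaceIncidence_mulVec_apply (x : G → ZMod 2) (e : edgs G) :
    (edgeFaceIncidence G).mulVec x e = ∑ f : G, if (e : Finset V) ⊆ f then x f else 0 := by
  simp [Matrix.mulVec, dotProduct, edgeFaceIncidence]

lemma eq_or_eq_of_card_facesOn_le_two {e f g h : Finset V} (h2 : (facesOn G e).card ≤ 2)
    (hf : f ∈ facesOn G e) (hg : g ∈ facesOn G e) (hh : h ∈ facesOn G e) (hfg : f ≠ g) :
    h = f ∨ h = g := by
  by_contra! hne
  exact h2.not_gt (two_lt_card.2 ⟨f, hf, g, hg, h, hh, hfg, hne.1.symm, hne.2.symm⟩)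

lemma edgeFaceIncidence_mulVec_injective (h2 : ∀ e ∈ edgs G, (facesOn G e).card ≤ 2)
    (hconn : (dualGraph G).Preconnected) (hbd : (bdryEdges G).Nonempty) :
    Function.Injective (edgeFaceIncidence G).mulVecLin := by
  rw [← LinearMap.ker_eq_bot, LinearMap.ker_eq_bot']
  intro x hx
  replace hx : ∀ e, (edgeFaceIncidence G).mulVec x e = 0 := congrFun hx
  have hadj : ∀ f g, (dualGraph G).Adj f g → x f = x g := by
    intro f g hfg
    have he : (f : Finset V) ∩ g ∈ edgs G := mem_edgs.2 ⟨f, f.2, inter_subset_left, hfg.2⟩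
    have hf : (f : Finset V) ∈ facesOn G (f ∩ g) := mem_facesOn.2 ⟨f.2, inter_subset_left⟩
    have hg : (g : Finset V) ∈ facesOn G (f ∩ g) := mem_facesOn.2 ⟨g.2, inter_subset_right⟩
    have := hx ⟨_, he⟩
    rw [edgeFaceIncidence_mulVec_apply, Fintype.sum_eq_add f g hfg.1] at this
    · simpa [inter_subset_left, inter_subset_right, CharTwo.add_eq_zero] using this
    · rintro h ⟨hhf, hhg⟩
      refine if_neg fun hh ↦ ?_
      rcases eq_or_eq_of_card_facesOn_le_two (h2 _ he) hf hg (mem_facesOn.2 ⟨h.2, hh⟩)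
        (Subtype.coe_ne_coe.2 hfg.1) with h' | h'
      exacts [hhf (Subtype.ext h'), hhg (Subtype.ext h')]
  obtain ⟨e, he⟩ := hbd
  obtain ⟨he, h1⟩ := mem_bdryEdges.1 he
  obtain ⟨f₀, hf₀⟩ := card_eq_one.1 h1
  obtain ⟨hf₀G, hef₀⟩ := mem_facesOn.1 (hf₀ ▸ mem_singleton_self f₀)
  have hx₀ : x ⟨f₀, hf₀G⟩ = 0 := by
    have := hx ⟨e, he⟩
    rw [edgeFaceIncidence_mulVec_apply, Fintype.sum_eq_single ⟨f₀, hf₀G⟩] at this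
    · simpa [hef₀] using this
    · intro h hne
      refine if_neg fun heh ↦ hne (Subtype.ext ?_)
      simpa [hf₀] using mem_facesOn.2 ⟨h.2, heh⟩
  funext f
  have := Relation.ReflTransGen.lift x hadj _ _
    ((SimpleGraph.reachable_iff_reflTransGen _ _).1 (hconn f ⟨f₀, hf₀G⟩))
  rw [Relation.reflTransGen_eq_self] at this
  rw [this, hx₀, Pi.zero_apply]

lemma rel_of_mem_verts (hconn : (dualGraph G).Preconnected) {r : V → V → Prop}
    (htrans : ∀ a b c, r a b → r b c → r a c) (hface : ∀ f ∈ G, ∀ u ∈ f, ∀ w ∈ f, r u w)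
    {u w : V} (hu : u ∈ verts G) (hw : w ∈ verts G) : r u w := by
  obtain ⟨f, hf, huf⟩ := mem_verts.1 hu
  obtain ⟨g, hg, hwg⟩ := mem_verts.1 hw
  have key : ∀ g' : G, Relation.ReflTransGen (dualGraph G).Adj ⟨f, hf⟩ g' →
      ∀ w ∈ (g' : Finset V), r u w := by
    intro g' h
    induction h with
    | refl => exact hface f hf u huf
    | @tail b c _ hadj ih =>
      intro w hw
      obtain ⟨s, hs⟩ : ((b : Finset V) ∩ c).Nonempty := card_pos.1 (hadj.2 ▸ two_pos)
      exact htrans _ _ _ (ih s (mem_inter.1 hs).1) (hface c c.2 s (mem_inter.1 hs).2 w hw)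
  exact key ⟨g, hg⟩ ((SimpleGraph.reachable_iff_reflTransGen _ _).1 (hconn _ _)) w hwg

lemma card_verts_le_rank_vertEdgeIncidence_add_one (hconn : (dualGraph G).Preconnected) :
    (verts G).card ≤ (vertEdgeIncidence G).rank + 1 := by
  rcases (verts G).eq_empty_or_nonempty with hV | ⟨u₀, hu₀⟩
  · simp [hV]
  set R := LinearMap.range (vertEdgeIncidence G).mulVecLin
  let δ : V → verts G → ZMod 2 := fun u w ↦ if (w : V) = u then 1 else 0
  have hδ : ∀ u, δ u + δ u = 0 := fun u ↦ funext fun _ ↦ CharTwo.add_self_eq_zero _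
  have hrel : ∀ u ∈ verts G, ∀ w ∈ verts G, δ u + δ w ∈ R := by
    refine fun u hu w hw ↦ rel_of_mem_verts hconn (r := fun u w ↦ δ u + δ w ∈ R) ?_ ?_ hu hw
    · intro a b c hab hbc
      have := R.add_mem hab hbc
      rwa [add_assoc, ← add_assoc (δ b), hδ, zero_add] at this
    · intro f hf u hu w hw
      rcases eq_or_ne u w with rfl | huw
      · rw [hδ]
        exact R.zero_mem
      refine ⟨Pi.single ⟨{u, w}, pair_mem_edgs hf hu hw huw⟩ 1, funext fun x ↦ ?_⟩
      rw [Matrix.mulVecLin_apply, Matrix.mulVec_single_one]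
      rcases eq_or_ne (x : V) u with hxu | hxu
      · simp [vertEdgeIncidence, δ, hxu, huw]
      rcases eq_or_ne (x : V) w with hxw | hxw
      · simp [vertEdgeIncidence, δ, hxw, huw.symm]
      · simp [vertEdgeIncidence, δ, hxu, hxw]
  have hspan : ⊤ ≤ R ⊔ Submodule.span (ZMod 2) {δ u₀} := by
    rw [← (Pi.basisFun (ZMod 2) (verts G)).span_eq, Submodule.span_le]
    rintro _ ⟨w, rfl⟩
    have hw : Pi.basisFun (ZMod 2) (verts G) w = (δ w + δ u₀) + δ u₀ := by
      rw [add_assoc, hδ, add_zero, Pi.basisFun_apply]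
      funext x
      simp only [Pi.single_apply, δ, Subtype.ext_iff]
    rw [hw]
    exact Submodule.add_mem_sup (hrel w w.2 u₀ hu₀) (Submodule.mem_span_singleton_self _)
  calc (verts G).card
      _ = Module.finrank (ZMod 2) (⊤ : Submodule (ZMod 2) (verts G → ZMod 2)) := by simp
      _ ≤ Module.finrank (ZMod 2) (R ⊔ Submodule.span (ZMod 2) {δ u₀} :) :=
        Submodule.finrank_mono hspan
      _ ≤ Module.finrank (ZMod 2) R + Module.finrank (ZMod 2) (Submodule.span (ZMod 2) {δ u₀}) :=
        Submodule.finrank_add_le_finrank_add_finrank _ _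
      _ ≤ (vertEdgeIncidence G).rank + 1 := by
        gcongr
        · rfl
        · simpa using finrank_span_le_card ({δ u₀} : Set (verts G → ZMod 2))

lemma card_add_card_verts_le (h3 : ∀ f ∈ G, f.card = 3)
    (h2 : ∀ e ∈ edgs G, (facesOn G e).card ≤ 2) (hconn : (dualGraph G).Preconnected)
    (hbd : (bdryEdges G).Nonempty) :
    G.card + (verts G).card ≤ (edgs G).card + 1 := by
  have hrank :=
    Matrix.rank_add_rank_le_card_of_mul_eq_zero (vertEdgeIncidence_mul_edgeFaceIncidence h3)
  have hinj : (edgeFaceIncidence G).rank = G.card := by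
    rw [Matrix.rank,
      LinearMap.finrank_range_of_inj (edgeFaceIncidence_mulVec_injective h2 hconn hbd)]
    simp
  have := card_verts_le_rank_vertEdgeIncidence_add_one hconn
  rw [Fintype.card_coe] at hrank
  omega

end EulerBound

section DualGraph

lemma connected_dualGraph_erase {F : Finset (Finset V)} {T g : Finset V}
    (hconn : (dualGraph F).Connected) (hg : g ∈ F) (hgT : g ≠ T)
    (hleaf : ∀ f ∈ F, f ≠ T → (f ∩ T).card = 2 → f = g) :
    (dualGraph (F.erase T)).Connected := by
  let s : Set F := {f | (f : Finset V) ≠ T}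
  have hinduce : ((dualGraph F).induce s).Preconnected := by
    refine hconn.preconnected.induce_of_degree_eq_one fun t ht ↦ ?_
    have htT : (t : Finset V) = T := not_not.1 ht
    intro x hx y hy
    have hx' := hleaf x x.2 (fun h ↦ hx.1 (Subtype.ext (h.trans htT.symm)).symm)
      (by rw [← htT, inter_comm]; exact hx.2)
    have hy' := hleaf y y.2 (fun h ↦ hy.1 (Subtype.ext (h.trans htT.symm)).symm)
      (by rw [← htT, inter_comm]; exact hy.2)
    exact Subtype.ext (hx'.trans hy'.symm)
  let φ : (dualGraph F).induce s →g dualGraph (F.erase T) :=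
    { toFun := fun f ↦ ⟨f.1.1, mem_erase.2 ⟨f.2, f.1.2⟩⟩
      map_rel' := fun h ↦ ⟨fun h' ↦ h.1 <| Subtype.ext <| by injection h', h.2⟩ }
  have hφ : Function.Surjective φ := fun f ↦
    ⟨⟨⟨f.1, mem_of_mem_erase f.2⟩, ne_of_mem_erase f.2⟩, rfl⟩
  exact (SimpleGraph.connected_iff _).2
    ⟨hinduce.map φ hφ, ⟨⟨g, mem_erase.2 ⟨hgT, hg⟩⟩⟩⟩

lemma exists_inter_card_eq_two {I : Finset (Finset V)} {T : Finset V}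
    (hconn : (dualGraph I).Connected) (hT : T ∈ I) (hcard : 1 < I.card) :
    ∃ f ∈ I, f ≠ T ∧ (f ∩ T).card = 2 := by
  have : Nontrivial I := Fintype.one_lt_card_iff_nontrivial.1 (by rwa [Fintype.card_coe])
  obtain ⟨f, hf⟩ :=
    SimpleGraph.exists_adj_iff_not_isIsolated.2 (hconn.preconnected.not_isIsolated ⟨T, hT⟩)
  exact ⟨f, f.2, fun h ↦ hf.1 (Subtype.ext h.symm), inter_comm T f ▸ hf.2⟩

end DualGraph

structure ShortMove (I : Finset (Finset V)) (T : Finset V) (v a b : V) : Prop where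
  mem : T ∈ I
  eq_triple : T = {v, a, b}
  ne_va : v ≠ a
  ne_vb : v ≠ b
  ne_ab : a ≠ b
  va_mem_bdryEdges : {v, a} ∈ bdryEdges I
  vb_mem_bdryEdges : {v, b} ∈ bdryEdges I
  card_facesOn_ab : (facesOn I {a, b}).card = 2

namespace ShortMove

variable {F I : Finset (Finset V)} {T : Finset V} {v a b : V}

lemma va_subset (s : ShortMove I T v a b) : {v, a} ⊆ T := by
  rw [s.eq_triple]
  exact insert_subset_insert v (singleton_subset_iff.2 (mem_insert_self a {b}))

lemma vb_subset (s : ShortMove I T v a b) : {v, b} ⊆ T := by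
  rw [s.eq_triple]
  exact insert_subset_insert v (singleton_subset_iff.2 (mem_insert_of_mem (mem_singleton_self b)))

lemma ab_subset (s : ShortMove I T v a b) : {a, b} ⊆ T := by
  rw [s.eq_triple]
  exact subset_insert v {a, b}

lemma edge_eq_of_subset (s : ShortMove I T v a b) {e : Finset V} (he : e ⊆ T)
    (hcard : e.card = 2) : e = {v, a} ∨ e = {v, b} ∨ e = {a, b} :=
  eq_pair_of_subset_triple (s.eq_triple ▸ he) hcard

lemma ab_subset_of_inter (s : ShortMove I T v a b) {f : Finset V} (hf : f ∈ I) (hfT : f ≠ T)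
    (hcard : (f ∩ T).card = 2) : {a, b} ⊆ f := by
  have hbd : ∀ e ∈ bdryEdges I, e ⊆ T → e ⊆ f → False := fun e he heT hef ↦
    hfT (mem_singleton.1 (facesOn_eq_singleton_of_mem_bdryEdges he s.mem heT ▸
      mem_facesOn.2 ⟨hf, hef⟩))
  rcases s.edge_eq_of_subset inter_subset_right hcard with h | h | h
  · exact (hbd _ s.va_mem_bdryEdges s.va_subset (h ▸ inter_subset_left)).elim
  · exact (hbd _ s.vb_mem_bdryEdges s.vb_subset (h ▸ inter_subset_left)).elim
  · exact h ▸ inter_subset_left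

lemma exists_partner (s : ShortMove I T v a b) : ∃ g ∈ I, g ≠ T ∧ {a, b} ⊆ g := by
  obtain ⟨g, hg, hgT⟩ := exists_mem_ne (s.card_facesOn_ab ▸ one_lt_two) T
  exact ⟨g, (mem_facesOn.1 hg).1, hgT, (mem_facesOn.1 hg).2⟩

lemma ab_mem_bdryEdges_erase (s : ShortMove I T v a b) : {a, b} ∈ bdryEdges (I.erase T) := by
  obtain ⟨g, hg, hgT, habg⟩ := s.exists_partner
  refine mem_bdryEdges.2
    ⟨mem_edgs.2 ⟨g, mem_erase.2 ⟨hgT, hg⟩, habg, card_pair s.ne_ab⟩, ?_⟩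
  rw [facesOn_erase, card_erase_of_mem (mem_facesOn.2 ⟨s.mem, s.ab_subset⟩), s.card_facesOn_ab]

lemma edgs_erase (s : ShortMove I T v a b) :
    edgs (I.erase T) = ((edgs I).erase {v, a}).erase {v, b} := by
  ext e
  simp only [mem_erase]
  constructor
  · intro he
    obtain ⟨f, hf, hef, -⟩ := mem_edgs.1 he
    obtain ⟨hfT, hf⟩ := mem_erase.1 hf
    have hbd : ∀ e' ∈ bdryEdges I, e' ⊆ T → e ≠ e' := fun e' he' he'T hee' ↦
      hfT (mem_singleton.1 (facesOn_eq_singleton_of_mem_bdryEdges he' s.mem he'T ▸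
        mem_facesOn.2 ⟨hf, hee' ▸ hef⟩))
    exact ⟨hbd _ s.vb_mem_bdryEdges s.vb_subset, hbd _ s.va_mem_bdryEdges s.va_subset,
      edgs_mono (erase_subset T I) he⟩
  · rintro ⟨hvb, hva, he⟩
    obtain ⟨f, hf, hef, hcard⟩ := mem_edgs.1 he
    by_cases hfT : f = T
    · obtain ⟨g, hg, hgT, habg⟩ := s.exists_partner
      have hab : e = {a, b} := by
        rcases s.edge_eq_of_subset (hfT ▸ hef) hcard with h | h | h
        exacts [(hva h).elim, (hvb h).elim, h]
      exact mem_edgs.2 ⟨g, mem_erase.2 ⟨hgT, hg⟩, hab ▸ habg, hcard⟩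
    · exact mem_edgs.2 ⟨f, mem_erase.2 ⟨hfT, hf⟩, hef, hcard⟩

lemma card_edgs_erase (s : ShortMove I T v a b) : (edgs (I.erase T)).card + 2 = (edgs I).card := by
  have hva : {v, a} ∈ edgs I := (mem_bdryEdges.1 s.va_mem_bdryEdges).1
  have hvb : {v, b} ∈ (edgs I).erase {v, a} := by
    refine mem_erase.2 ⟨fun h ↦ s.ne_ab ?_, (mem_bdryEdges.1 s.vb_mem_bdryEdges).1⟩
    have : b ∈ ({v, a} : Finset V) := h ▸ mem_insert_of_mem (mem_singleton_self b)
    simpa [s.ne_vb.symm, eq_comm] using this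
  rw [s.edgs_erase, ← card_erase_add_one hva, ← card_erase_add_one hvb]

lemma erase_verts_subset (s : ShortMove I T v a b) : (verts I).erase v ⊆ verts (I.erase T) := by
  intro w hw
  obtain ⟨hwv, hw⟩ := mem_erase.1 hw
  obtain ⟨f, hf, hwf⟩ := mem_verts.1 hw
  by_cases hfT : f = T
  · obtain ⟨g, hg, hgT, habg⟩ := s.exists_partner
    have hwab : w ∈ ({a, b} : Finset V) := by
      rw [hfT, s.eq_triple] at hwf
      simpa [hwv] using hwf
    exact mem_verts.2 ⟨g, mem_erase.2 ⟨hgT, hg⟩, habg hwab⟩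
  · exact mem_verts.2 ⟨f, mem_erase.2 ⟨hfT, hf⟩, hwf⟩

lemma connected_erase (s : ShortMove I T v a b) (hI : IsDisk I) :
    (dualGraph (I.erase T)).Connected := by
  obtain ⟨g, hg, hgT, habg⟩ := s.exists_partner
  refine connected_dualGraph_erase hI.connected hg hgT fun f hf hfT hcard ↦ ?_
  have := eq_or_eq_of_card_facesOn_le_two s.card_facesOn_ab.le
    (mem_facesOn.2 ⟨s.mem, s.ab_subset⟩) (mem_facesOn.2 ⟨hg, habg⟩)
    (mem_facesOn.2 ⟨hf, s.ab_subset_of_inter hf hfT hcard⟩) hgT.symm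
  exact this.resolve_left hfT

lemma apex_unique (s : ShortMove I T v a b) (hI : IsDisk I) {f : Finset V} (hf : f ∈ I)
    (hvf : v ∈ f) : f = T := by
  by_contra hfT
  have hverts : verts (I.erase T) = verts I := by
    refine (biUnion_subset_biUnion_of_subset_left _ (erase_subset T I)).antisymm fun w hw ↦ ?_
    rcases eq_or_ne w v with rfl | hwv
    · exact mem_verts.2 ⟨f, mem_erase.2 ⟨hfT, hf⟩, hvf⟩
    · exact s.erase_verts_subset (mem_erase.2 ⟨hwv, hw⟩)
  have hbound := card_add_card_verts_le (G := I.erase T)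
    (fun f hf ↦ hI.card_eq_three (mem_of_mem_erase hf))
    (fun _ ↦ hI.card_facesOn_le_two_of_subset (erase_subset T I))
    (s.connected_erase hI).preconnected ⟨_, s.ab_mem_bdryEdges_erase⟩
  have := s.card_edgs_erase
  have := card_erase_add_one s.mem
  have := hI.euler
  rw [hverts] at hbound
  omega

lemma verts_erase (s : ShortMove I T v a b) (hI : IsDisk I) :
    verts (I.erase T) = (verts I).erase v := by
  refine (subset_erase.2 ⟨biUnion_subset_biUnion_of_subset_left _ (erase_subset T I),
    fun hv ↦ ?_⟩).antisymm s.erase_verts_subset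
  obtain ⟨f, hf, hvf⟩ := mem_verts.1 hv
  exact ne_of_mem_erase hf (s.apex_unique hI (mem_of_mem_erase hf) hvf)

lemma isDisk_erase (s : ShortMove I T v a b) (hI : IsDisk I) : IsDisk (I.erase T) := by
  obtain ⟨g, hg, hgT, -⟩ := s.exists_partner
  refine ⟨⟨g, mem_erase.2 ⟨hgT, hg⟩⟩, fun f hf ↦ hI.card_eq_three (mem_of_mem_erase hf),
    s.connected_erase hI, fun _ ↦ hI.card_facesOn_le_two_of_subset (erase_subset T I), ?_⟩
  have hv : v ∈ verts I := mem_verts.2 ⟨T, s.mem, s.va_subset (mem_insert_self v {a})⟩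
  have := card_erase_add_one hv
  have := s.card_edgs_erase
  have := card_erase_add_one s.mem
  have := hI.euler
  rw [s.verts_erase hI]
  omega

lemma bdryVerts_erase (s : ShortMove I T v a b) (hI : IsDisk I) :
    bdryVerts (I.erase T) = (bdryVerts I).erase v := by
  ext w
  rw [mem_erase, mem_bdryVerts, mem_bdryVerts]
  constructor
  · rintro ⟨e, he, hwe⟩
    by_cases heT : e ⊆ T
    · have hedge := (mem_bdryEdges.1 he).1
      rw [s.edgs_erase, mem_erase, mem_erase] at hedge
      have hab : e = {a, b} := by
        rcases s.edge_eq_of_subset heT (card_eq_two_of_mem_edgs hedge.2.2) with h | h | h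
        exacts [(hedge.2.1 h).elim, (hedge.1 h).elim, h]
      subst hab
      rcases mem_insert.1 hwe with rfl | hwb
      · exact ⟨s.ne_va.symm, _, s.va_mem_bdryEdges, mem_insert_of_mem (mem_singleton_self w)⟩
      · obtain rfl := mem_singleton.1 hwb
        exact ⟨s.ne_vb.symm, _, s.vb_mem_bdryEdges, mem_insert_of_mem (mem_singleton_self w)⟩
    · refine ⟨?_, e, (mem_bdryEdges_erase_iff_of_not_subset heT).1 he, hwe⟩
      rintro rfl
      obtain ⟨f, hf, hef, -⟩ := mem_edgs.1 (mem_bdryEdges.1 he).1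
      exact ne_of_mem_erase hf (s.apex_unique hI (mem_of_mem_erase hf) (hef hwe))
  · rintro ⟨hwv, e, he, hwe⟩
    by_cases heT : e ⊆ T
    · refine ⟨_, s.ab_mem_bdryEdges_erase, ?_⟩
      rcases s.edge_eq_of_subset heT (card_eq_two_of_mem_edgs (mem_bdryEdges.1 he).1) with
        rfl | rfl | rfl
      · simp only [mem_insert, mem_singleton, hwv, false_or] at hwe
        simp [hwe]
      · simp only [mem_insert, mem_singleton, hwv, false_or] at hwe
        simp [hwe]
      · exact hwe
    · exact ⟨e, (mem_bdryEdges_erase_iff_of_not_subset heT).2 he, hwe⟩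

lemma bdryLen_erase (s : ShortMove I T v a b) (hI : IsDisk I) :
    bdryLen (I.erase T) + 1 = bdryLen I := by
  rw [bdryLen, bdryLen, s.bdryVerts_erase hI]
  exact card_erase_add_one (mem_bdryVerts.2 ⟨_, s.va_mem_bdryEdges, mem_insert_self v {a}⟩)

lemma mono (s : ShortMove F T v a b) (hT : T ∈ I) (hIF : I ⊆ F) (hI : IsDisk I)
    (hcard : 1 < I.card) : ShortMove I T v a b := by
  have hbd : ∀ e ∈ bdryEdges F, e ⊆ T → e ∈ bdryEdges I := fun e he heT ↦ by
    refine mem_bdryEdges.2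
      ⟨mem_edgs.2 ⟨T, hT, heT, card_eq_two_of_mem_edgs (mem_bdryEdges.1 he).1⟩, ?_⟩
    rw [eq_singleton_iff_unique_mem.2 ⟨mem_facesOn.2 ⟨hT, heT⟩, fun f hf ↦ mem_singleton.1
      (facesOn_eq_singleton_of_mem_bdryEdges he s.mem heT ▸ facesOn_mono hIF hf)⟩,
      card_singleton]
  obtain ⟨f, hf, hfT, hinter⟩ := exists_inter_card_eq_two hI.connected hT hcard
  have hab : {a, b} ⊆ f := s.ab_subset_of_inter (hIF hf) hfT hinter
  have hpair : {T, f} ⊆ facesOn I {a, b} := insert_subset (mem_facesOn.2 ⟨hT, s.ab_subset⟩)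
    (singleton_subset_iff.2 (mem_facesOn.2 ⟨hf, hab⟩))
  refine ⟨hT, s.eq_triple, s.ne_va, s.ne_vb, s.ne_ab, hbd _ s.va_mem_bdryEdges s.va_subset,
    hbd _ s.vb_mem_bdryEdges s.vb_subset, le_antisymm ?_ ?_⟩
  · exact hI.card_facesOn_le_two (mem_edgs.2 ⟨T, hT, s.ab_subset, card_pair s.ne_ab⟩)
  · exact card_pair hfT.symm ▸ card_le_card hpair

end ShortMove

lemma exists_shortMove {F : Finset (Finset V)} {T : Finset V} (hF : IsDisk F) (hT : T ∈ F)
    (hshort : (faceEdges T ∩ bdryEdges F).card = 2) : ∃ v a b, ShortMove F T v a b := by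
  have hinterior : ((faceEdges T).filter (· ∉ bdryEdges F)).card = 1 := by
    have h3 : (faceEdges T).card = 3 := by
      rw [faceEdges, card_powersetCard, hF.card_eq_three hT]
      rfl
    have := card_filter_add_card_filter_not (s := faceEdges T) (· ∈ bdryEdges F)
    rw [filter_mem_eq_inter, hshort, h3] at this
    omega
  obtain ⟨e, he⟩ := card_eq_one.1 hinterior
  have hbd : ∀ x ∈ faceEdges T, x ≠ e → x ∈ bdryEdges F := fun x hx hxe ↦
    by_contra fun h ↦ hxe (mem_singleton.1 (he ▸ mem_filter.2 ⟨hx, h⟩))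
  obtain ⟨heT, hebd⟩ := mem_filter.1 (he ▸ mem_singleton_self e)
  obtain ⟨heT, hcard⟩ := mem_faceEdges.1 heT
  obtain ⟨a, b, hab, rfl⟩ := card_eq_two.1 hcard
  obtain ⟨v, hv⟩ := card_eq_one.1 (show (T \ {a, b}).card = 1 by
    rw [card_sdiff_of_subset heT, hF.card_eq_three hT, card_pair hab])
  have hvab : v ∉ ({a, b} : Finset V) := (mem_sdiff.1 (hv ▸ mem_singleton_self v)).2
  have hTeq : T = {v, a, b} := by
    rw [← sdiff_union_of_subset heT, hv]
    exact (insert_eq v {a, b}).symm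
  have hva : v ≠ a := fun h ↦ hvab (h ▸ mem_insert_self v {b})
  have hvb : v ≠ b := fun h ↦ hvab (h ▸ mem_insert_of_mem (mem_singleton_self v))
  have habF : {a, b} ∈ edgs F := mem_edgs.2 ⟨T, hT, heT, hcard⟩
  have hab1 : (facesOn F {a, b}).card ≠ 1 := fun h ↦ hebd (mem_bdryEdges.2 ⟨habF, h⟩)
  have hab0 : 0 < (facesOn F {a, b}).card := card_pos.2 ⟨T, mem_facesOn.2 ⟨hT, heT⟩⟩
  have hab2 := hF.card_facesOn_le_two habF
  refine ⟨v, a, b, hT, hTeq, hva, hvb, hab, hbd _ ?_ ?_, hbd _ ?_ ?_, by omega⟩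
  · exact mem_faceEdges.2 ⟨by simp [hTeq, insert_subset_iff], card_pair hva⟩
  · exact fun h ↦ hvab (h ▸ mem_insert_self v {a})
  · exact mem_faceEdges.2 ⟨by simp [hTeq, insert_subset_iff], card_pair hvb⟩
  · exact fun h ↦ hvab (h ▸ mem_insert_self v {b})

section ListMove

variable {α : Type*} {L : List α} {i k : ℕ}

lemma eraseIdx_append_perm (hi : i < L.length) : (L.eraseIdx i ++ [L[i]]).Perm L :=
  List.perm_append_comm.trans (List.getElem_cons_eraseIdx_perm hi)

lemma take_eraseIdx_append_of_le (hi : i < L.length) (hk : k ≤ i) :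
    (L.eraseIdx i ++ [L[i]]).take k = L.take k := by
  rw [List.take_append_of_le_length (by rw [List.length_eraseIdx_of_lt hi]; omega),
    List.take_eraseIdx_eq_take_of_le _ _ _ hk]

lemma toFinset_take_eraseIdx_append [DecidableEq α] (hL : L.Nodup) (hik : i ≤ k)
    (hk : k < L.length) :
    ((L.eraseIdx i ++ [L[i]]).take k).toFinset = (L.take (k + 1)).toFinset.erase L[i] := by
  have hi : i < (L.take (k + 1)).length := by simp; omega
  have htake : (L.eraseIdx i ++ [L[i]]).take k = (L.take (k + 1)).eraseIdx i := by
    rw [List.take_append_of_le_length (by rw [List.length_eraseIdx_of_lt (by omega)]; omega)]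
    conv_lhs => rw [← List.take_append_drop (k + 1) L]
    have hlen : ((L.take (k + 1)).eraseIdx i).length = k := by
      rw [List.length_eraseIdx_of_lt hi, List.length_take]
      omega
    rw [List.eraseIdx_append_of_lt_length hi, List.take_append_of_le_length hlen.ge,
      List.take_of_length_le hlen.le]
  have hnd : (L.take (k + 1)).Nodup := hL.sublist (List.take_sublist _ _)
  ext x
  rw [htake, ← hnd.erase_getElem i hi, List.mem_toFinset, hnd.mem_erase_iff, mem_erase,
    List.mem_toFinset, List.getElem_take]

end ListMove

section Width

/-- At the first place where `ys` drops below `xs`, with value `b` in `xs`, the entries `≥ b` of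
the sorted list `ys` all come earlier, so `xs` has more of them. -/
lemma not_lex_of_countP_le {ys xs : List ℕ} (hys : ys.Pairwise (· ≥ ·))
    (hcount : ∀ n, xs.countP (n ≤ ·) ≤ ys.countP (n ≤ ·)) : ¬ List.Lex (· < ·) ys xs := by
  intro h
  induction h with
  | @nil a => simpa using hcount a
  | cons _ ih =>
    exact ih hys.of_cons fun n ↦ by simpa [List.countP_cons] using hcount n
  | @rel a l₁ b l₂ hab =>
    have h0 : l₁.countP (b ≤ ·) = 0 := List.countP_eq_zero.2 fun x hx ↦ by
      simpa using (List.rel_of_pairwise_cons hys hx).trans_lt hab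
    simpa [List.countP_cons, h0, hab.not_ge] using hcount b

lemma not_lex_insertionSort_of_forall₂_of_sublist {xs zs ys : List ℕ}
    (h₁ : List.Forall₂ (· ≤ ·) xs zs) (h₂ : zs.Sublist ys) :
    ¬ List.Lex (· < ·) (ys.insertionSort (· ≥ ·)) (xs.insertionSort (· ≥ ·)) := by
  refine not_lex_of_countP_le (List.pairwise_insertionSort _ _) fun n ↦ ?_
  rw [(List.perm_insertionSort _ xs).countP_eq, (List.perm_insertionSort _ ys).countP_eq]
  refine le_trans ?_ h₂.countP_le
  clear h₂
  induction h₁ with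
  | nil => rfl
  | @cons a b _ _ hab _ ih =>
    simp only [List.countP_cons, decide_eq_true_eq]
    split_ifs <;> omega

end Width

section Orderings

variable {L L' : List (Finset V)}

lemma mem_maxIndices {j : ℕ} : j ∈ maxIndices L ↔ LocalMaxAt L j := by
  simp only [maxIndices, List.mem_filter, List.mem_range, decide_eq_true_eq, and_iff_right_iff_imp]
  exact fun h ↦ h.2.1

lemma sortedLT_maxIndices (L : List (Finset V)) : (maxIndices L).SortedLT :=
  (List.pairwise_lt_range.filter _).sortedLT

lemma not_lex_widthList {φ : ℕ → ℕ} (hφ : StrictMono φ)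
    (h : ∀ j, LocalMaxAt L' j → LocalMaxAt L (φ j) ∧ seq L' j ≤ seq L (φ j)) :
    ¬ List.Lex (· < ·) (widthList L) (widthList L') := by
  have hsorted : ((maxIndices L').map φ).SortedLT :=
    ((sortedLT_maxIndices L').pairwise.map φ fun _ _ h ↦ hφ h).sortedLT
  have hsub : ((maxIndices L').map φ).Sublist (maxIndices L) := by
    refine List.sublist_of_subperm_of_sortedLE (hsorted.nodup.subperm fun x hx ↦ ?_)
      hsorted.sortedLE (sortedLT_maxIndices L).sortedLE
    obtain ⟨j, hj, rfl⟩ := List.mem_map.1 hx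
    exact mem_maxIndices.2 (h j (mem_maxIndices.1 hj)).1
  refine not_lex_insertionSort_of_forall₂_of_sublist (zs := (maxIndices L').map (seq L ∘ φ)) ?_
    (by rw [← List.map_map]; exact hsub.map _)
  rw [List.forall₂_map_right_iff, List.forall₂_map_left_iff]
  exact List.forall₂_same.2 fun j hj ↦ (h j (mem_maxIndices.1 hj)).2

lemma LocalMaxAt.of_seq_shift {i j : ℕ} (hj : LocalMaxAt L' j) (hlen : L'.length = L.length)
    (hlow : ∀ k ≤ i, seq L' k = seq L k)
    (hhigh : ∀ k, i ≤ k → 1 ≤ k → k < L.length → seq L (k + 1) = seq L' k + 1)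
    (hone : seq L' 1 = seq L 1) (htop : seq L' L.length = seq L L.length) :
    LocalMaxAt L (if j < i then j else j + 1) ∧
      seq L' j ≤ seq L (if j < i then j else j + 1) := by
  obtain ⟨hj1, hjm, hl, hr⟩ := hj
  rw [hlen] at hjm
  split_ifs with hji
  · have := hlow (j - 1) (by omega)
    have := hlow j (by omega)
    have := hlow (j + 1) (by omega)
    exact ⟨⟨hj1, hjm, by omega, by omega⟩, by omega⟩
  have hj := hhigh j (by omega) hj1 hjm
  have hjm' : j + 1 < L.length := by
    by_contra
    rw [show j + 1 = L.length by omega] at hj hr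
    omega
  have hj' := hhigh (j + 1) (by omega) (by omega) hjm'
  refine ⟨⟨by omega, hjm', ?_, by omega⟩, by omega⟩
  rw [Nat.add_sub_cancel, hj]
  rcases (show j = i ∨ j = 1 ∨ (i < j ∧ 2 ≤ j) by omega) with rfl | rfl | ⟨hij, hj2⟩
  · rw [← hlow j le_rfl]
    omega
  · rw [← hone]
    omega
  · have := hhigh (j - 1) (by omega) (by omega) (by omega)
    rw [Nat.sub_add_cancel (by omega)] at this
    omega

lemma seq_eraseIdx_append_of_le {i k : ℕ} (hi : i < L.length) (hk : k ≤ i) :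
    seq (L.eraseIdx i ++ [L[i]]) k = seq L k := by
  rw [seq, seq, take_eraseIdx_append_of_le hi hk]

lemma seq_length_of_perm (h : L'.Perm L) : seq L' L.length = seq L L.length := by
  rw [seq, seq, List.take_of_length_le h.length_eq.le, List.take_length,
    List.toFinset_eq_of_perm _ _ h]

end Orderings

section GoodOrderings

variable {F : Finset (Finset V)} {L : List (Finset V)} {i k : ℕ} {v a b : V}

lemma Good.isDisk_take (hF : IsDisk F) (hL : Good F L) (hk1 : 1 ≤ k) (hk : k ≤ L.length) :
    IsDisk (L.take k).toFinset := by
  rcases hk.lt_or_eq with hk | rfl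
  · exact hL.2.2 k hk1 hk
  · rwa [List.take_length, hL.2.1]

lemma Good.seq_one (hF : IsDisk F) (hL : Good F L) (hne : L ≠ []) : seq L 1 = 3 := by
  obtain ⟨f, L', rfl⟩ := List.exists_cons_of_ne_nil hne
  have hf : f ∈ F := hL.2.1 ▸ List.mem_toFinset.2 List.mem_cons_self
  simp [seq, bdryLen_singleton (hF.card_eq_three hf)]

lemma Good.shortMove_take_succ (hF : IsDisk F) (hL : Good F L) (hi : i < L.length)
    (s : ShortMove F L[i] v a b) (hik : i ≤ k) (hk1 : 1 ≤ k) (hk : k < L.length) :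
    ShortMove (L.take (k + 1)).toFinset L[i] v a b := by
  refine s.mono (List.mem_toFinset.2 (List.mem_take_iff_getElem.2 ⟨i, by simp; omega, rfl⟩))
    (fun f hf ↦ ?_) (hL.isDisk_take hF (by omega) (by omega)) ?_
  · exact hL.2.1 ▸ List.mem_toFinset.2 (List.mem_of_mem_take (List.mem_toFinset.1 hf))
  · rw [List.toFinset_card_of_nodup (hL.1.sublist (List.take_sublist _ _)), List.length_take]
    omega

lemma Good.eraseIdx_append (hF : IsDisk F) (hL : Good F L) (hi : i < L.length)
    (s : ShortMove F L[i] v a b) : Good F (L.eraseIdx i ++ [L[i]]) := by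
  have hperm := eraseIdx_append_perm hi
  refine ⟨hperm.nodup_iff.2 hL.1, (List.toFinset_eq_of_perm _ _ hperm).trans hL.2.1,
    fun k hk1 hk ↦ ?_⟩
  rw [hperm.length_eq] at hk
  rcases le_or_gt k i with hki | hik
  · rw [take_eraseIdx_append_of_le hi hki]
    exact hL.2.2 k hk1 hk
  · rw [toFinset_take_eraseIdx_append hL.1 hik.le hk]
    exact (hL.shortMove_take_succ hF hi s hik.le hk1 hk).isDisk_erase
      (hL.isDisk_take hF (by omega) (by omega))

lemma Good.seq_succ_eq_of_shortMove (hF : IsDisk F) (hL : Good F L) (hi : i < L.length)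
    (s : ShortMove F L[i] v a b) (hik : i ≤ k) (hk1 : 1 ≤ k) (hk : k < L.length) :
    seq L (k + 1) = seq (L.eraseIdx i ++ [L[i]]) k + 1 := by
  rw [seq, seq, toFinset_take_eraseIdx_append hL.1 hik hk,
    (hL.shortMove_take_succ hF hi s hik hk1 hk).bdryLen_erase
      (hL.isDisk_take hF (by omega) (by omega))]

end GoodOrderings

end TriSphere

open TriSphere in
theorem reordering_principle_general {V : Type} [DecidableEq V]
    (F : Finset (Finset V)) (L : List (Finset V)) (hF : IsDisk F) (hL : Good F L)
    (i : ℕ) (hi : i < L.length)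
    (hshort : (faceEdges (L.get ⟨i, hi⟩) ∩ bdryEdges F).card = 2) :
    Good F (L.eraseIdx i ++ [L.get ⟨i, hi⟩]) ∧
      ¬ List.Lex (· < ·) (widthList L) (widthList (L.eraseIdx i ++ [L.get ⟨i, hi⟩])) := by
  change (faceEdges L[i] ∩ bdryEdges F).card = 2 at hshort
  change Good F (L.eraseIdx i ++ [L[i]]) ∧
    ¬ List.Lex (· < ·) (widthList L) (widthList (L.eraseIdx i ++ [L[i]]))
  have hperm := eraseIdx_append_perm hi
  obtain ⟨v, a, b, s⟩ :=
    exists_shortMove hF (hL.2.1 ▸ List.mem_toFinset.2 (List.getElem_mem hi)) hshort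
  have hgood := hL.eraseIdx_append hF hi s
  have hone : seq (L.eraseIdx i ++ [L[i]]) 1 = seq L 1 := by
    rw [hgood.seq_one hF (List.ne_nil_of_length_pos (by rw [hperm.length_eq]; omega)),
      hL.seq_one hF (List.ne_nil_of_length_pos (by omega))]
  have hshift : StrictMono fun j ↦ if j < i then j else j + 1 := fun j j' h ↦ by
    dsimp only
    split_ifs <;> omega
  exact ⟨hgood, not_lex_widthList hshift fun j hj ↦ hj.of_seq_shift hperm.length_eq
    (fun _ ↦ seq_eraseIdx_append_of_le hi) (fun _ ↦ hL.seq_succ_eq_of_shortMove hF hi s) hone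
    (seq_length_of_perm hperm)⟩

open TriSphere in
/-- reordering principle: If `∂D` has a shortening move across the `i`-th
triangle of a good ordering of a triangulated disk `D`, then moving that triangle to the
end of the ordering yields another good ordering whose width is no larger (so each local
maximum is unchanged or reduced: the new width is lexicographically at most the old). -/
theorem reordering_principle {V : Type} [Fintype V] [DecidableEq V]
    (F : Finset (Finset V)) (L : List (Finset V)) (hF : IsDisk F) (hL : Good F L)
    (i : ℕ) (hi : i < L.length)
    (hshort : (faceEdges (L.get ⟨i, hi⟩) ∩ bdryEdges F).card = 2) :
    Good F (L.eraseIdx i ++ [L.get ⟨i, hi⟩]) ∧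
      ¬ List.Lex (· < ·) (widthList L) (widthList (L.eraseIdx i ++ [L.get ⟨i, hi⟩])) :=
  reordering_principle_general F L hF hL i hi hshort
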